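/- Let N ≥ 2, λ0 > 0, λ1 > 0, a0 ≥ 0, a1 ≥ 0, let φ0, φ1 : ℝ → ℝ satisfy Assumption 1 with parameters a0, a1 respectively, let s_i(x) = φ_i(x) − |x| and φ_i^M(x, v) = |x| + s_i′(v)(x − v) + s_i(v) for i = 0, 1, and let y ∈ ℝ^N. Define F(x) = (1/2)‖y − x‖₂² + λ0·Σ_{n=1}^{N} φ0(x_n) + λ1·Σ_{n=1}^{N−1} φ1((Dx)_n) and F^M(x, v) = (1/2)‖y − x‖₂² + λ0·Σ_{n=1}^{N} φ0^M(x_n, v_n) + λ1·Σ_{n=1}^{N−1} φ1^M((Dx)_n, (Dv)_n). Then F^M(x, v) ≥ F(x) for all x, v ∈ ℝ^N, and F^M(v, v) = F(v) for all v ∈ ℝ^N. -/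

import Mathlib

/-- Assumption 1: a sparsity-inducing penalty function `φ` with non-convexity
parameter `a ≥ 0`: `φ` is continuous on `ℝ`, twice continuously differentiable
on `ℝ \ {0}` and symmetric; `φ' > 0` and `φ'' ≤ 0` on `(0, ∞)`; the right
derivative of `φ` at `0` is `1`; and `inf_{x ≠ 0} φ''(x) = φ''(0⁺) = -a`. -/
structure PenaltyAssumption (φ : ℝ → ℝ) (a : ℝ) : Prop where
  continuous : Continuous φ
  symm : ∀ x : ℝ, φ (-x) = φ x
  hasDerivAt : ∀ x : ℝ, x ≠ 0 → HasDerivAt φ (deriv φ x) x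
  hasDerivAt2 : ∀ x : ℝ, x ≠ 0 → HasDerivAt (deriv φ) (deriv (deriv φ) x) x
  continuousOn_deriv2 : ContinuousOn (deriv (deriv φ)) {x : ℝ | x ≠ 0}
  deriv_pos : ∀ x : ℝ, 0 < x → 0 < deriv φ x
  deriv2_nonpos : ∀ x : ℝ, 0 < x → deriv (deriv φ) x ≤ 0
  rightDeriv_zero_eq_one : HasDerivWithinAt φ 1 (Set.Ioi 0) 0
  isGLB_deriv2 : IsGLB (deriv (deriv φ) '' {x : ℝ | x ≠ 0}) (-a)
  tendsto_deriv2 : Filter.Tendsto (deriv (deriv φ)) (nhdsWithin 0 (Set.Ioi 0)) (nhds (-a))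

/-!
The penalty splits as `φ = |·| + s` with `s = φ - |·|`. Assumption 1 makes `s` differentiable
everywhere (at `0` because the right derivative of `φ` is `1` and `s` is even) with antitone
derivative (because `φ' ≤ 1` and `φ'` decreases on `(0, ∞)`), so `s` is concave and lies below
its tangent lines. Replacing `s` by its tangent at `v` in each penalty term, with weights
`λ > 0`, gives a majorizer of `F` that touches it at `x = v`.
-/

open Set

lemma ConcaveOn.le_add_deriv_mul_sub {S : Set ℝ} {f : ℝ → ℝ} (hf : ConcaveOn ℝ S f)
    {x v : ℝ} (hx : x ∈ S) (hv : v ∈ S) (hd : DifferentiableAt ℝ f v) :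
    f x ≤ f v + deriv f v * (x - v) := by
  rcases lt_trichotomy x v with hxv | rfl | hvx
  · have := hf.deriv_le_slope hx hv hxv hd
    rw [slope_def_field, le_div_iff₀ (sub_pos.2 hxv)] at this
    linarith
  · simp
  · have := hf.slope_le_deriv hv hx hvx hd
    rw [slope_def_field, div_le_iff₀ (sub_pos.2 hvx)] at this
    linarith

lemma Function.Even.deriv {f : ℝ → ℝ} (hf : Function.Even f) : Function.Odd (deriv f) := by
  intro x
  have h := deriv_comp_neg (f := f) (x := -x)
  rwa [neg_neg, show (fun y => f (-y)) = f from funext hf] at h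

lemma Function.Even.hasDerivAt_zero {f : ℝ → ℝ} (hf : Function.Even f)
    (h : HasDerivWithinAt f 0 (Ici 0) 0) : HasDerivAt f 0 0 := by
  have hleft : HasDerivWithinAt f 0 (Iic 0) 0 := by
    have := HasDerivWithinAt.comp_of_eq 0 h (hasDerivAt_neg 0).hasDerivWithinAt
      (fun t ht => neg_nonneg.2 (mem_Iic.1 ht)) neg_zero.symm
    simpa [Function.comp_def, hf.eq] using this
  rw [← hasDerivWithinAt_univ, ← Iic_union_Ici]
  exact hleft.union h

namespace PenaltyAssumption

variable {φ : ℝ → ℝ} {a : ℝ}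

lemma antitoneOn_deriv (hφ : PenaltyAssumption φ a) : AntitoneOn (deriv φ) (Ioi 0) := by
  refine antitoneOn_of_deriv_nonpos (convex_Ioi 0) ?_ ?_ ?_
  · exact fun t ht => (hφ.hasDerivAt2 t ht.ne').continuousAt.continuousWithinAt
  · rw [interior_Ioi]
    exact fun t ht => (hφ.hasDerivAt2 t ht.ne').differentiableAt.differentiableWithinAt
  · rw [interior_Ioi]
    exact hφ.deriv2_nonpos

lemma concaveOn_Ici (hφ : PenaltyAssumption φ a) : ConcaveOn ℝ (Ici 0) φ := by
  refine AntitoneOn.concaveOn_of_deriv (convex_Ici 0) hφ.continuous.continuousOn ?_ ?_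
  · rw [interior_Ici]
    exact fun t ht => (hφ.hasDerivAt t ht.ne').differentiableAt.differentiableWithinAt
  · rw [interior_Ici]
    exact hφ.antitoneOn_deriv

lemma deriv_le_one (hφ : PenaltyAssumption φ a) {t : ℝ} (ht : 0 < t) : deriv φ t ≤ 1 :=
  calc deriv φ t ≤ slope φ 0 t :=
        hφ.concaveOn_Ici.deriv_le_slope self_mem_Ici ht.le ht
          (hφ.hasDerivAt t ht.ne').differentiableAt
    _ ≤ 1 := hφ.concaveOn_Ici.slope_le_of_hasDerivWithinAt_Ioi self_mem_Ici ht.le ht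
        hφ.rightDeriv_zero_eq_one

lemma even_sub_abs (hφ : PenaltyAssumption φ a) : Function.Even fun x => φ x - |x| := fun x => by
  simp only [hφ.symm, abs_neg]

lemma hasDerivAt_sub_abs_of_pos (hφ : PenaltyAssumption φ a) {t : ℝ} (ht : 0 < t) :
    HasDerivAt (fun x => φ x - |x|) (deriv φ t - 1) t :=
  (hφ.hasDerivAt t ht.ne').sub (hasDerivAt_abs_pos ht)

lemma hasDerivAt_sub_abs_zero (hφ : PenaltyAssumption φ a) :
    HasDerivAt (fun x => φ x - |x|) 0 0 := by
  refine hφ.even_sub_abs.hasDerivAt_zero (HasDerivWithinAt.Ici_of_Ioi ?_)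
  have habs : HasDerivWithinAt (fun x : ℝ => |x|) 1 (Ioi 0) 0 :=
    (hasDerivWithinAt_id 0 _).congr (fun x hx => abs_of_pos hx) abs_zero
  have := hφ.rightDeriv_zero_eq_one.sub habs
  rwa [sub_self] at this

lemma differentiable_sub_abs (hφ : PenaltyAssumption φ a) :
    Differentiable ℝ fun x => φ x - |x| := by
  have hnonneg : ∀ t, 0 ≤ t → DifferentiableAt ℝ (fun x => φ x - |x|) t := by
    intro t ht
    rcases ht.eq_or_lt with rfl | ht
    · exact hφ.hasDerivAt_sub_abs_zero.differentiableAt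
    · exact (hφ.hasDerivAt_sub_abs_of_pos ht).differentiableAt
  intro t
  rcases le_total 0 t with ht | ht
  · exact hnonneg t ht
  · rw [differentiableAt_iff_comp_neg, funext hφ.even_sub_abs]
    exact hnonneg (-t) (neg_nonneg.2 ht)

lemma antitone_deriv_sub_abs (hφ : PenaltyAssumption φ a) :
    Antitone (deriv fun x => φ x - |x|) := by
  refine antitone_of_odd_of_monotoneOn_nonneg hφ.even_sub_abs.deriv ?_
  have hpos : ∀ t, 0 < t → deriv (fun x => φ x - |x|) t = deriv φ t - 1 :=
    fun t ht => (hφ.hasDerivAt_sub_abs_of_pos ht).deriv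
  intro u hu w hw huw
  rcases (mem_Ici.1 hu).eq_or_lt with rfl | hu
  · rw [hφ.hasDerivAt_sub_abs_zero.deriv]
    rcases (mem_Ici.1 hw).eq_or_lt with rfl | hw
    · rw [hφ.hasDerivAt_sub_abs_zero.deriv]
    · rw [hpos w hw]
      linarith [hφ.deriv_le_one hw]
  · rw [hpos u hu, hpos w (hu.trans_le huw)]
    linarith [hφ.antitoneOn_deriv hu (mem_Ioi.2 (hu.trans_le huw)) huw]

lemma concaveOn_sub_abs (hφ : PenaltyAssumption φ a) : ConcaveOn ℝ univ fun x => φ x - |x| :=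
  hφ.antitone_deriv_sub_abs.concaveOn_univ_of_deriv hφ.differentiable_sub_abs

lemma le_abs_add_tangent_sub_abs (hφ : PenaltyAssumption φ a) (x v : ℝ) :
    φ x ≤ |x| + deriv (fun x => φ x - |x|) v * (x - v) + (φ v - |v|) := by
  have := hφ.concaveOn_sub_abs.le_add_deriv_mul_sub (mem_univ x) (mem_univ v)
    (hφ.differentiable_sub_abs v)
  linarith

end PenaltyAssumption

theorem cnc_flsa_majorizer_general (N : ℕ)
    (lam0 lam1 a0 a1 : ℝ) (hlam0 : 0 < lam0) (hlam1 : 0 < lam1)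
    (φ0 φ1 : ℝ → ℝ)
    (hφ0 : PenaltyAssumption φ0 a0) (hφ1 : PenaltyAssumption φ1 a1)
    (y : Fin (N + 1) → ℝ)
    (s0 s1 : ℝ → ℝ) (hs0 : s0 = fun x => φ0 x - |x|)
    (hs1 : s1 = fun x => φ1 x - |x|)
    (φ0M φ1M : ℝ → ℝ → ℝ)
    (hφ0M : φ0M = fun x v => |x| + deriv s0 v * (x - v) + s0 v)
    (hφ1M : φ1M = fun x v => |x| + deriv s1 v * (x - v) + s1 v)
    (F : (Fin (N + 1) → ℝ) → ℝ) (FM : (Fin (N + 1) → ℝ) → (Fin (N + 1) → ℝ) → ℝ)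
    (hF : ∀ x, F x = (1 / 2) * ∑ n, (y n - x n) ^ 2
      + lam0 * ∑ n, φ0 (x n)
      + lam1 * ∑ i : Fin N, φ1 (x i.succ - x i.castSucc))
    (hFM : ∀ x v, FM x v = (1 / 2) * ∑ n, (y n - x n) ^ 2
      + lam0 * ∑ n, φ0M (x n) (v n)
      + lam1 * ∑ i : Fin N,
          φ1M (x i.succ - x i.castSucc) (v i.succ - v i.castSucc)) :
    (∀ x v : Fin (N + 1) → ℝ, F x ≤ FM x v) ∧
    (∀ v : Fin (N + 1) → ℝ, FM v v = F v) := by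
  subst hs0 hs1 hφ0M hφ1M
  refine ⟨fun x v => ?_, fun v => ?_⟩
  · rw [hF, hFM]
    gcongr with n _ i _
    · exact hφ0.le_abs_add_tangent_sub_abs _ _
    · exact hφ1.le_abs_add_tangent_sub_abs _ _
  · simp only [hF, hFM, sub_self, mul_zero, add_zero, add_sub_cancel]

/-- **The majorizer of the CNC fused lasso objective.**  With
`sᵢ(x) = φᵢ(x) − |x|` and `φᵢᴹ(x, v) = |x| + sᵢ′(v)(x − v) + sᵢ(v)`, the
function `Fᴹ(x, v) = ½‖y − x‖₂² + λ0 Σₙ φ0ᴹ(xₙ, vₙ) + λ1 Σₙ φ1ᴹ((Dx)ₙ, (Dv)ₙ)`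
satisfies `Fᴹ(x, v) ≥ F(x)` for all `x, v` and `Fᴹ(v, v) = F(v)`, where
`F(x) = ½‖y − x‖₂² + λ0 Σₙ φ0(xₙ) + λ1 Σₙ φ1((Dx)ₙ)` and
`(Dx)ₙ = x_{n+1} − xₙ` (signal length `N + 1 ≥ 2`). -/
theorem cnc_flsa_majorizer (N : ℕ) (hN : 1 ≤ N)
    (lam0 lam1 a0 a1 : ℝ) (hlam0 : 0 < lam0) (hlam1 : 0 < lam1)
    (ha0 : 0 ≤ a0) (ha1 : 0 ≤ a1)
    (φ0 φ1 : ℝ → ℝ)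
    (hφ0 : PenaltyAssumption φ0 a0) (hφ1 : PenaltyAssumption φ1 a1)
    (y : Fin (N + 1) → ℝ)
    (s0 s1 : ℝ → ℝ) (hs0 : s0 = fun x => φ0 x - |x|)
    (hs1 : s1 = fun x => φ1 x - |x|)
    (φ0M φ1M : ℝ → ℝ → ℝ)
    (hφ0M : φ0M = fun x v => |x| + deriv s0 v * (x - v) + s0 v)
    (hφ1M : φ1M = fun x v => |x| + deriv s1 v * (x - v) + s1 v)
    (F : (Fin (N + 1) → ℝ) → ℝ) (FM : (Fin (N + 1) → ℝ) → (Fin (N + 1) → ℝ) → ℝ)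
    (hF : ∀ x, F x = (1 / 2) * ∑ n, (y n - x n) ^ 2
      + lam0 * ∑ n, φ0 (x n)
      + lam1 * ∑ i : Fin N, φ1 (x i.succ - x i.castSucc))
    (hFM : ∀ x v, FM x v = (1 / 2) * ∑ n, (y n - x n) ^ 2
      + lam0 * ∑ n, φ0M (x n) (v n)
      + lam1 * ∑ i : Fin N,
          φ1M (x i.succ - x i.castSucc) (v i.succ - v i.castSucc)) :
    (∀ x v : Fin (N + 1) → ℝ, F x ≤ FM x v) ∧
    (∀ v : Fin (N + 1) → ℝ, FM v v = F v) :=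
  cnc_flsa_majorizer_general N lam0 lam1 a0 a1 hlam0 hlam1 φ0 φ1 hφ0 hφ1 y s0 s1 hs0 hs1 φ0M φ1M
    hφ0M hφ1M F FM hF hFM
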